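/- arXiv:1206.0441 — 4 statements merged into one kernel-verified Lean document; each statement's English description precedes it below -/
import Mathlib

section
/- Let V be a finite-dimensional real inner product space of dimension d, S an invertible symmetric endomorphism of V with real eigenvalues λ₁,…,λ_d (with multiplicity), and m ∈ V. Then lim_{ε→0⁺} ∫_V e^{−ε‖x‖²} e^{−(i/2)⟨x−m, S(x−m)⟩} dx exists and equals (2π)^{d/2} / ∏_k √(i λ_k), where √(iλ) := e^{(πi/4)·sgn(λ)}·|λ|^{1/2}. -/
open MeasureTheory Filter Topology Complex Real

/-!
In coordinates `x = m + ∑ tᵢ bᵢ` given by an eigenbasis of `S`, the regularized integrand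
factorizes into the one-dimensional Gaussians `exp (-ε (t + q)² - (iλ/2) t²)`. For `ε > 0` each
has a closed form `(π / (ε + iλ/2))^{1/2} · exp (…)`, which is continuous at `ε = 0` because
`π / (iλ/2)` is purely imaginary, hence in the slit plane where `z ↦ z^{1/2}` is continuous;
its value there is `√(2π) / √(iλ)`.
-/

lemma log_ofReal_mul_I {r : ℝ} (hr : r ≠ 0) :
    log (r * I) = Real.log |r| + Real.sign r * (π / 2) * I := by
  rcases hr.lt_or_gt with h | h
  · have : (r : ℂ) * I = (|r| : ℝ) * (-I) := by rw [abs_of_neg h]; push_cast; ring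
    rw [this, log_ofReal_mul (abs_pos.2 hr) (neg_ne_zero.2 I_ne_zero), log_neg_I,
      Real.sign_of_neg h]
    push_cast; ring
  · rw [log_ofReal_mul h I_ne_zero, log_I, Real.sign_of_pos h, abs_of_pos h]
    push_cast; ring

lemma ofReal_mul_I_cpow_half {r : ℝ} (hr : r ≠ 0) :
    ((r : ℂ) * I) ^ (1 / 2 : ℂ) =
      cexp (π * I / 4 * (Real.sign r : ℝ)) * ((|r| ^ ((1 : ℝ) / 2) : ℝ) : ℂ) := by
  rw [cpow_def_of_ne_zero (by simpa using hr), log_ofReal_mul_I hr,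
    Real.rpow_def_of_pos (abs_pos.2 hr), ofReal_exp, ← Complex.exp_add]
  push_cast; ring_nf

lemma pi_div_I_mul_half (l : ℝ) : (π : ℂ) / (I * l / 2) = ((-(2 * π / l) : ℝ) : ℂ) * I := by
  rcases eq_or_ne l 0 with rfl | hl
  · simp
  field_simp
  push_cast
  ring_nf
  rw [I_sq]
  ring

lemma pi_div_I_mul_half_mem_slitPlane {l : ℝ} (hl : l ≠ 0) :
    (π : ℂ) / (I * l / 2) ∈ slitPlane := by
  rw [pi_div_I_mul_half, mem_slitPlane_iff]
  right
  simp [pi_ne_zero, hl]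

lemma pi_div_I_mul_half_cpow_half {l : ℝ} (hl : l ≠ 0) :
    ((π : ℂ) / (I * l / 2)) ^ (1 / 2 : ℂ) = (((2 * π) ^ ((1 : ℝ) / 2) : ℝ) : ℂ) /
      (cexp (π * I / 4 * (Real.sign l : ℝ)) * ((|l| ^ ((1 : ℝ) / 2) : ℝ) : ℂ)) := by
  have hsign : Real.sign (2 * π / l) = Real.sign l := by
    rcases hl.lt_or_gt with h | h
    · rw [Real.sign_of_neg h, Real.sign_of_neg (div_neg_of_pos_of_neg (by positivity) h)]
    · rw [Real.sign_of_pos h, Real.sign_of_pos (by positivity)]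
  have habs : |l| ^ ((1 : ℝ) / 2) ≠ 0 := by positivity
  rw [pi_div_I_mul_half, ofReal_mul_I_cpow_half (by simpa [pi_ne_zero] using hl), Real.sign_neg,
    hsign, abs_neg, abs_div, abs_of_pos (by positivity : 0 < 2 * π),
    Real.div_rpow (by positivity) (abs_nonneg l), ofReal_neg, mul_neg, Complex.exp_neg]
  push_cast
  field_simp

lemma integral_regularized_fresnel (l q : ℝ) {ε : ℝ} (hε : 0 < ε) :
    ∫ t : ℝ, cexp (-((ε * (t + q) ^ 2 : ℝ) : ℂ)) * cexp (-(I / 2) * ((l * t ^ 2 : ℝ) : ℂ)) =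
      (π / (ε + I * l / 2)) ^ (1 / 2 : ℂ) * cexp (ε ^ 2 * q ^ 2 / (ε + I * l / 2) - ε * q ^ 2) := by
  have hb : (-(ε + I * l / 2)).re < 0 := by simpa using hε
  simp_rw [← Complex.exp_add]
  convert integral_cexp_quadratic hb (-2 * ε * q) (-ε * q ^ 2) using 3 with t
  · congr 1; push_cast; ring
  · rw [neg_neg]
  · rw [mul_neg, div_neg]
    field_simp
    ring

lemma tendsto_integral_regularized_fresnel {l : ℝ} (hl : l ≠ 0) (q : ℝ) :
    Tendsto (fun ε : ℝ =>
        ∫ t : ℝ, cexp (-((ε * (t + q) ^ 2 : ℝ) : ℂ)) * cexp (-(I / 2) * ((l * t ^ 2 : ℝ) : ℂ)))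
      (𝓝[>] 0) (𝓝 ((π / (I * l / 2)) ^ (1 / 2 : ℂ))) := by
  have hden : ContinuousAt (fun ε : ℝ => (ε : ℂ) + I * l / 2) 0 := by fun_prop
  have hden0 : ((0 : ℝ) : ℂ) + I * l / 2 ≠ 0 := by simp [hl]
  have hcont : ContinuousAt (fun ε : ℝ => (π / (ε + I * l / 2)) ^ (1 / 2 : ℂ) *
      cexp (ε ^ 2 * q ^ 2 / (ε + I * l / 2) - ε * q ^ 2)) 0 := by
    refine ContinuousAt.mul ?_ ?_
    · exact (continuousAt_const.div hden hden0).cpow continuousAt_const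
        (by simpa using pi_div_I_mul_half_mem_slitPlane hl)
    · exact ((ContinuousAt.div (by fun_prop) hden hden0).sub (by fun_prop)).cexp
  have hlim := hcont.tendsto
  simp only [ofReal_zero, zero_add, zero_pow two_ne_zero, zero_mul, zero_div, sub_zero,
    Complex.exp_zero, mul_one] at hlim
  refine Tendsto.congr' ?_ (tendsto_nhdsWithin_of_tendsto_nhds hlim)
  filter_upwards [self_mem_nhdsWithin] with ε hε
  exact (integral_regularized_fresnel l q hε).symm

section OrthonormalCoordinates

variable {ι E : Type*} [Fintype ι] [NormedAddCommGroup E] [InnerProductSpace ℝ E]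

lemma OrthonormalBasis.norm_sq_repr_symm_add (b : OrthonormalBasis ι ℝ E)
    (c : EuclideanSpace ℝ ι) (m : E) :
    ‖b.repr.symm c + m‖ ^ 2 = ∑ i, (c i + b.repr m i) ^ 2 := by
  rw [← b.repr.norm_map, map_add, b.repr.apply_symm_apply, EuclideanSpace.norm_sq_eq]
  simp

lemma OrthonormalBasis.inner_repr_symm_map_of_eigen (b : OrthonormalBasis ι ℝ E)
    {S : E →ₗ[ℝ] E} {lam : ι → ℝ} (hdiag : ∀ i, S (b i) = lam i • b i)
    (c : EuclideanSpace ℝ ι) :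
    inner ℝ (b.repr.symm c) (S (b.repr.symm c)) = ∑ i, lam i * c i ^ 2 := by
  have hS : S (b.repr.symm c) = b.repr.symm (WithLp.toLp 2 fun i => lam i * c i) := by
    simp only [← b.sum_repr_symm, map_sum, _root_.map_smul, hdiag, smul_smul, mul_comm]
  rw [hS, LinearIsometryEquiv.inner_map_map, PiLp.inner_apply]
  refine Finset.sum_congr rfl fun i _ => ?_
  simp only [RCLike.inner_apply, conj_trivial]
  ring

lemma OrthonormalBasis.integral_comp_repr_symm_toLp [FiniteDimensional ℝ E] [MeasurableSpace E]
    [BorelSpace E] {G : Type*} [NormedAddCommGroup G] [NormedSpace ℝ G]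
    (b : OrthonormalBasis ι ℝ E) (f : E → G) :
    ∫ c : ι → ℝ, f (b.repr.symm (WithLp.toLp 2 c)) = ∫ x, f x :=
  calc ∫ c : ι → ℝ, f (b.repr.symm (WithLp.toLp 2 c))
    _ = ∫ c : EuclideanSpace ℝ ι, f (b.repr.symm c) :=
      ((EuclideanSpace.volume_preserving_symm_measurableEquiv_toLp ι).integral_comp
        (MeasurableEquiv.toLp 2 (ι → ℝ)).symm.measurableEmbedding _).symm
    _ = ∫ x, f x :=
      b.measurePreserving_repr_symm.integral_comp b.measurableEquiv.symm.measurableEmbedding f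

lemma OrthonormalBasis.integral_regularized_quadratic_phase_eq_prod [FiniteDimensional ℝ E]
    [MeasurableSpace E] [BorelSpace E] (b : OrthonormalBasis ι ℝ E) {S : E →ₗ[ℝ] E}
    {lam : ι → ℝ} (hdiag : ∀ i, S (b i) = lam i • b i) (m : E) (ε : ℝ) :
    ∫ x : E, cexp (-((ε * ‖x‖ ^ 2 : ℝ) : ℂ)) *
        cexp (-(I / 2) * ((inner ℝ (x - m) (S (x - m)) : ℝ) : ℂ)) =
      ∏ i, ∫ t : ℝ, cexp (-((ε * (t + b.repr m i) ^ 2 : ℝ) : ℂ)) *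
        cexp (-(I / 2) * ((lam i * t ^ 2 : ℝ) : ℂ)) := by
  rw [← integral_add_right_eq_self _ m, ← b.integral_comp_repr_symm_toLp,
    ← integral_fintype_prod_eq_prod]
  congr 1 with c
  rw [add_sub_cancel_right, b.norm_sq_repr_symm_add, b.inner_repr_symm_map_of_eigen hdiag,
    Finset.prod_mul_distrib, ← Complex.exp_sum, ← Complex.exp_sum]
  push_cast
  simp only [Finset.mul_sum, Finset.sum_neg_distrib]

end OrthonormalCoordinates

/-- Let `V` be a `d`-dimensional real inner product space, `S` an invertible symmetric
endomorphism of `V`, diagonalized by an orthonormal basis `b` with (nonzero) real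
eigenvalues `lam i`, and `m ∈ V`.  Then
`lim_{ε→0⁺} ∫_V e^{−ε‖x‖²} e^{−(i/2)⟨x−m, S(x−m)⟩} dx = (2π)^{d/2} / ∏_k √(i λ_k)`,
where `√(iλ) := e^{(πi/4)·sgn(λ)}·|λ|^{1/2}`. -/
theorem stmt_4 (d : ℕ)
    (S : EuclideanSpace ℝ (Fin d) →ₗ[ℝ] EuclideanSpace ℝ (Fin d))
    (m : EuclideanSpace ℝ (Fin d)) (lam : Fin d → ℝ)
    (b : OrthonormalBasis (Fin d) ℝ (EuclideanSpace ℝ (Fin d)))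
    (hdiag : ∀ i, S (b i) = lam i • b i) (hinv : ∀ i, lam i ≠ 0) :
    Tendsto (fun ε : ℝ =>
        ∫ x : EuclideanSpace ℝ (Fin d),
          Complex.exp (-((ε * ‖x‖ ^ 2 : ℝ) : ℂ)) *
            Complex.exp (-(Complex.I / 2) *
              ((inner ℝ (x - m) (S (x - m)) : ℝ) : ℂ)))
      (𝓝[>] (0 : ℝ))
      (𝓝 ((((2 * Real.pi) ^ ((d : ℝ) / 2) : ℝ) : ℂ) /
        ∏ i, (Complex.exp (Real.pi * Complex.I / 4 * (Real.sign (lam i) : ℝ)) *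
          ((|lam i| ^ ((1 : ℝ) / 2) : ℝ) : ℂ)))) := by
  have hlim := tendsto_finsetProd Finset.univ fun i _ =>
    tendsto_integral_regularized_fresnel (hinv i) (b.repr m i)
  have hconst : (((2 * π) ^ ((1 : ℝ) / 2) : ℝ) : ℂ) ^ d = (((2 * π) ^ ((d : ℝ) / 2) : ℝ) : ℂ) := by
    rw [← ofReal_pow, ← Real.rpow_natCast, ← Real.rpow_mul (by positivity), one_div_mul_eq_div]
  rw [Finset.prod_congr rfl fun i _ => pi_div_I_mul_half_cpow_half (hinv i),
    Finset.prod_div_distrib, Finset.prod_const, Finset.card_univ, Fintype.card_fin, hconst] at hlim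
  simpa only [b.integral_regularized_quadratic_phase_eq_prod hdiag m] using hlim
end

section
/- Let V = V₁ ⊕ V₂ be an orthogonal decomposition of a finite-dimensional real inner product space, M: V₁ → V₂ a linear isomorphism, and for x ∈ V write x = x₁ + x₂ with x_j ∈ V_j. Let f: V₁ → ℂ be bounded and continuous and fix v ∈ V₂. Then lim_{ε→0⁺} (1/Z) ∫_V f(x₁) e^{i⟨x₂,v⟩} e^{−ε‖x‖²} e^{i⟨x₂, M x₁⟩} dx = f(−M⁻¹v), where Z = (2π)^{dim V₂} / |det(Mψ)| for any fixed isometry ψ: V₂ → V₁ (the value |det(Mψ)| is independent of the choice of ψ). -/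
/-!
Integrating out `x₂` first, the Fourier transform of the Gaussian `e^{-ε‖x₂‖²}` turns the
integral into `(2π)^d ∫ f(x) e^{-ε‖x‖²} δ_ε(v + M x) dx`, where `δ_ε` is the heat kernel.
The substitution `u = M x` contributes `|det M|⁻¹`, which cancels the normalisation, and
`δ_ε(u + v)` concentrates at `u = -v`: after rescaling `u = -v + 2√ε z` it becomes the fixed
Gaussian `π^{-d/2} e^{-‖z‖²}`, so dominated convergence yields the limit `f(-M⁻¹ v)`.
-/

open MeasureTheory Filter Topology Module Real Complex

namespace MeasureTheory.Measure

variable {E F : Type*} [NormedAddCommGroup E] [NormedSpace ℝ E] [MeasurableSpace E]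
  [BorelSpace E] [FiniteDimensional ℝ E] (μ : Measure E) [μ.IsAddHaarMeasure]
  [NormedAddCommGroup F] [NormedSpace ℝ F]

theorem integral_comp_linearEquiv (L : E ≃ₗ[ℝ] E) (g : E → F) :
    ∫ x, g (L x) ∂μ = |LinearMap.det (L : E →ₗ[ℝ] E)|⁻¹ • ∫ y, g y ∂μ := by
  let e : E ≃ᵐ E := L.toContinuousLinearEquiv.toHomeomorph.toMeasurableEquiv
  have hmap : μ.map e = ENNReal.ofReal |(LinearMap.det (L : E →ₗ[ℝ] E))⁻¹| • μ :=
    map_linearMap_addHaar_eq_smul_addHaar μ L.isUnit_det'.ne_zero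
  change ∫ x, g (e x) ∂μ = _
  rw [← integral_map_equiv e g, hmap, integral_smul_measure,
    ENNReal.toReal_ofReal (abs_nonneg _), abs_inv]

end MeasureTheory.Measure

variable {V : Type*} [NormedAddCommGroup V] [InnerProductSpace ℝ V]

variable (V) in
noncomputable def heatKernel (ε : ℝ) (w : V) : ℝ :=
  (4 * π * ε) ^ (-(finrank ℝ V : ℝ) / 2) * rexp (-‖w‖ ^ 2 / (4 * ε))

theorem pow_mul_heatKernel_smul {ε : ℝ} (hε : 0 < ε) (z : V) :
    (2 * √ε) ^ finrank ℝ V * heatKernel V ε ((2 * √ε) • z) =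
      π ^ (-(finrank ℝ V : ℝ) / 2) * rexp (-‖z‖ ^ 2) := by
  have hs : (2 * √ε) ^ 2 = 4 * ε := by rw [mul_pow, sq_sqrt hε.le]; norm_num
  have hpow : (2 * √ε) ^ finrank ℝ V = (4 * ε) ^ ((finrank ℝ V : ℝ) / 2) := by
    rw [← hs, ← rpow_natCast, ← rpow_natCast _ 2, ← rpow_mul (by positivity)]
    ring_nf
  have hexp : -‖(2 * √ε) • z‖ ^ 2 / (4 * ε) = -‖z‖ ^ 2 := by
    rw [norm_smul, mul_pow, norm_of_nonneg (by positivity), hs]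
    field_simp
  have h4 : 4 * π * ε = π * (4 * ε) := by ring
  rw [heatKernel, hexp, hpow, h4, mul_rpow pi_pos.le (by positivity), ← mul_assoc,
    mul_left_comm, ← rpow_add (by positivity), neg_div, add_neg_cancel, rpow_zero, mul_one]

variable [FiniteDimensional ℝ V] [MeasurableSpace V] [BorelSpace V]

theorem integrable_rexp_neg_mul_sq_norm {b : ℝ} (hb : 0 < b) :
    Integrable (fun x : V ↦ rexp (-b * ‖x‖ ^ 2)) := by
  refine (GaussianFourier.integrable_cexp_neg_mul_sq_norm_add (V := V)
    (show 0 < (b : ℂ).re from hb) 0 0).norm.congr (.of_forall fun x ↦ ?_)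
  simp [Complex.norm_exp, ← ofReal_pow]

section ApproximateIdentity

variable {F : Type*} [NormedAddCommGroup F] [NormedSpace ℝ F]

theorem integral_heatKernel_smul_eq_rescale {ε : ℝ} (hε : 0 < ε) (h : V → F) (a : V) :
    ∫ u, heatKernel V ε (u - a) • h u =
      ∫ z, (π ^ (-(finrank ℝ V : ℝ) / 2) * rexp (-‖z‖ ^ 2)) • h (a + (2 * √ε) • z) := by
  have hs : 0 < (2 * √ε) ^ finrank ℝ V := by positivity
  have hscale := Measure.integral_comp_smul (volume : Measure V)
    (fun y ↦ heatKernel V ε y • h (a + y)) (2 * √ε)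
  have htranslate : ∫ y, heatKernel V ε y • h (a + y) = ∫ u, heatKernel V ε (u - a) • h u := by
    simpa using integral_add_left_eq_self (fun u ↦ heatKernel V ε (u - a) • h u) a
  calc ∫ u, heatKernel V ε (u - a) • h u
      = (2 * √ε) ^ finrank ℝ V •
          ∫ z, heatKernel V ε ((2 * √ε) • z) • h (a + (2 * √ε) • z) := by
        rw [hscale, htranslate, smul_smul, abs_of_pos (inv_pos.2 hs), mul_inv_cancel₀ hs.ne',
          one_smul]
    _ = _ := by
        rw [← integral_smul]
        simp_rw [smul_smul, pow_mul_heatKernel_smul hε]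

theorem tendsto_integral_heatKernel_smul [CompleteSpace F] {g : ℝ → V → F}
    (hg : Continuous (Function.uncurry g)) {C : ℝ} (hC : ∀ ε > 0, ∀ u, ‖g ε u‖ ≤ C) (a : V) :
    Tendsto (fun ε ↦ ∫ u, heatKernel V ε (u - a) • g ε u) (𝓝[>] 0) (𝓝 (g 0 a)) := by
  set ρ : V → ℝ := fun z ↦ π ^ (-(finrank ℝ V : ℝ) / 2) * rexp (-‖z‖ ^ 2) with hρ_def
  have hρ_nonneg (z : V) : 0 ≤ ρ z := by positivity
  have hρ_integrable : Integrable ρ := by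
    simpa using (integrable_rexp_neg_mul_sq_norm (V := V) one_pos).const_mul
      (π ^ (-(finrank ℝ V : ℝ) / 2))
  have hρ_integral : ∫ z, ρ z = 1 := by
    have hgauss := GaussianFourier.integral_rexp_neg_mul_sq_norm (V := V) one_pos
    simp only [neg_mul, one_mul, div_one] at hgauss
    rw [hρ_def, integral_const_mul, hgauss, neg_div, rpow_neg pi_pos.le,
      inv_mul_cancel₀ (by positivity)]
  have hpath (z : V) : Continuous fun ε ↦ g ε (a + (2 * √ε) • z) :=
    hg.comp (by fun_prop : Continuous fun ε : ℝ ↦ (ε, a + (2 * √ε) • z))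
  have hlim : Tendsto (fun ε ↦ ∫ z, ρ z • g ε (a + (2 * √ε) • z)) (𝓝[>] 0)
      (𝓝 (∫ z, ρ z • g 0 a)) := by
    refine tendsto_integral_filter_of_dominated_convergence (fun z ↦ ρ z * C) ?_ ?_
      (hρ_integrable.mul_const C) ?_
    · refine .of_forall fun ε ↦ Continuous.aestronglyMeasurable ?_
      exact (by fun_prop : Continuous ρ).smul
        ((hg.uncurry_left ε).comp (by fun_prop : Continuous fun z : V ↦ a + (2 * √ε) • z))
    · filter_upwards [self_mem_nhdsWithin] with ε hε
      refine .of_forall fun z ↦ ?_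
      rw [norm_smul, norm_of_nonneg (hρ_nonneg z)]
      exact mul_le_mul_of_nonneg_left (hC ε hε _) (hρ_nonneg z)
    · refine .of_forall fun z ↦ (Tendsto.const_smul ?_ (ρ z)).mono_left nhdsWithin_le_nhds
      simpa using (hpath z).tendsto 0
  rw [integral_smul_const, hρ_integral, one_smul] at hlim
  refine hlim.congr' ?_
  filter_upwards [self_mem_nhdsWithin] with ε hε
  exact (integral_heatKernel_smul_eq_rescale hε _ a).symm

end ApproximateIdentity

theorem integral_cexp_neg_mul_sq_norm_add_I_mul_inner {ε : ℝ} (hε : 0 < ε) (w : V) :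
    ∫ y : V, cexp (-ε * ‖y‖ ^ 2 + I * (inner ℝ w y : ℝ)) =
      ((2 * π) ^ finrank ℝ V * heatKernel V ε w : ℝ) := by
  have hconst : (2 * π) ^ finrank ℝ V * (4 * π * ε) ^ (-(finrank ℝ V : ℝ) / 2) =
      (π / ε) ^ ((finrank ℝ V : ℝ) / 2) := by
    have hsq : (2 * π) ^ finrank ℝ V = ((2 * π) ^ 2) ^ ((finrank ℝ V : ℝ) / 2) := by
      rw [← rpow_natCast, ← rpow_natCast _ 2, ← rpow_mul (by positivity)]
      ring_nf
    rw [hsq, neg_div, rpow_neg (by positivity), ← div_eq_mul_inv,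
      ← div_rpow (by positivity) (by positivity)]
    congr 1
    field_simp
    ring
  rw [GaussianFourier.integral_cexp_neg_mul_sq_norm_add (by simpa using hε), heatKernel,
    ← mul_assoc, hconst, ← ofReal_div, ofReal_mul, ofReal_cpow (by positivity), I_sq]
  push_cast
  ring_nf

variable {W : Type*} [NormedAddCommGroup W] [InnerProductSpace ℝ W] [FiniteDimensional ℝ W]
  [MeasurableSpace W] [BorelSpace W]

theorem integral_prod_eq_integral_heatKernel (M : W →ₗ[ℝ] V) {f : W → ℂ} (hf : Continuous f)
    {C : ℝ} (hC : ∀ x, ‖f x‖ ≤ C) (v : V) {ε : ℝ} (hε : 0 < ε) :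
    ∫ p : W × V, f p.1 * cexp (I * ((inner ℝ p.2 v : ℝ) : ℂ)) *
        cexp (-((ε * (‖p.1‖ ^ 2 + ‖p.2‖ ^ 2) : ℝ) : ℂ)) *
        cexp (I * ((inner ℝ p.2 (M p.1) : ℝ) : ℂ)) =
      ((2 * π) ^ finrank ℝ V : ℝ) •
        ∫ x, heatKernel V ε (v + M x) • (f x * cexp (-((ε * ‖x‖ ^ 2 : ℝ) : ℂ))) := by
  have hM : Continuous M := M.continuous_of_finiteDimensional
  have hsplit (p : W × V) :
      f p.1 * cexp (I * ((inner ℝ p.2 v : ℝ) : ℂ)) *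
          cexp (-((ε * (‖p.1‖ ^ 2 + ‖p.2‖ ^ 2) : ℝ) : ℂ)) *
          cexp (I * ((inner ℝ p.2 (M p.1) : ℝ) : ℂ)) =
        f p.1 * cexp (-((ε * ‖p.1‖ ^ 2 : ℝ) : ℂ)) *
          cexp (-ε * ‖p.2‖ ^ 2 + I * (inner ℝ (v + M p.1) p.2 : ℝ)) := by
    rw [inner_add_left, real_inner_comm v, real_inner_comm (M p.1)]
    simp only [mul_assoc, ← Complex.exp_add]
    congr 2
    push_cast
    ring
  have hbound : Integrable (fun p : W × V ↦ C * rexp (-ε * ‖p.1‖ ^ 2) * rexp (-ε * ‖p.2‖ ^ 2))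
      (volume.prod volume) :=
    ((integrable_rexp_neg_mul_sq_norm hε).const_mul C).mul_prod
      (integrable_rexp_neg_mul_sq_norm hε)
  have hint : Integrable (fun p : W × V ↦ f p.1 * cexp (-((ε * ‖p.1‖ ^ 2 : ℝ) : ℂ)) *
      cexp (-ε * ‖p.2‖ ^ 2 + I * (inner ℝ (v + M p.1) p.2 : ℝ))) (volume.prod volume) := by
    refine hbound.mono' (Continuous.aestronglyMeasurable (by fun_prop)) (.of_forall fun p ↦ ?_)
    simp only [norm_mul, Complex.norm_exp, ofReal_mul, neg_re, mul_re, ofReal_re, ofReal_im,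
      mul_zero, sub_zero, ← ofReal_pow, neg_mul, add_re, I_re, zero_mul, I_im, sub_self, add_zero]
    gcongr
    exact hC p.1
  simp_rw [hsplit]
  rw [Measure.volume_eq_prod, integral_prod _ hint]
  simp_rw [integral_const_mul, integral_cexp_neg_mul_sq_norm_add_I_mul_inner hε, ← integral_smul]
  congr with x
  rw [Complex.real_smul, Complex.real_smul]
  push_cast
  ring

theorem tendsto_abs_det_smul_integral_heatKernel (M : V ≃ₗ[ℝ] V) {f : V → ℂ}
    (hf : Continuous f) {C : ℝ} (hC : ∀ x, ‖f x‖ ≤ C) (v : V) :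
    Tendsto (fun ε ↦ |LinearMap.det M.toLinearMap| •
        ∫ x, heatKernel V ε (v + M x) • (f x * cexp (-((ε * ‖x‖ ^ 2 : ℝ) : ℂ))))
      (𝓝[>] 0) (𝓝 (f (-(M.symm v)))) := by
  have hdet : LinearMap.det M.toLinearMap ≠ 0 := M.isUnit_det'.ne_zero
  have hMsymm : Continuous M.symm := M.symm.toLinearMap.continuous_of_finiteDimensional
  let g : ℝ → V → ℂ := fun ε u ↦ f (M.symm u) * cexp (-((ε * ‖M.symm u‖ ^ 2 : ℝ) : ℂ))
  have hg : Continuous (Function.uncurry g) := by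
    simp only [g, Function.uncurry_def]
    fun_prop
  have hgC : ∀ ε > 0, ∀ u, ‖g ε u‖ ≤ C := by
    intro ε hε u
    simp only [g, norm_mul, Complex.norm_exp, neg_re, ofReal_re]
    exact (mul_le_of_le_one_right (norm_nonneg _)
      (exp_le_one_iff.2 (neg_nonpos.2 (by positivity)))).trans (hC _)
  have hlim := tendsto_integral_heatKernel_smul hg hgC (-v)
  simp only [g, zero_mul, ofReal_zero, neg_zero, Complex.exp_zero, mul_one, map_neg,
    sub_neg_eq_add, add_comm _ v] at hlim
  refine hlim.congr fun ε ↦ ?_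
  have hchange := Measure.integral_comp_linearEquiv volume M
    (fun u ↦ heatKernel V ε (u - -v) • g ε u)
  simp only [g, LinearEquiv.symm_apply_apply, sub_neg_eq_add, add_comm _ v] at hchange
  rw [hchange, smul_smul, mul_inv_cancel₀ (abs_ne_zero.2 hdet), one_smul]

/-- Proposition 3.4: with `V = V₁ ⊕ V₂` (both identified with `ℝⁿ` by an isometry),
`M : V₁ → V₂` a linear isomorphism, `f` bounded continuous on `V₁` and `v ∈ V₂`:
`lim_{ε→0⁺} (1/Z) ∫_V f(x₁) e^{i⟨x₂,v⟩} e^{−ε‖x‖²} e^{i⟨x₂,Mx₁⟩} dx = f(−M⁻¹v)`,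
where `Z = (2π)^{dim V₂}/|det M|`. -/
theorem stmt_7 (n : ℕ)
    (M : EuclideanSpace ℝ (Fin n) ≃ₗ[ℝ] EuclideanSpace ℝ (Fin n))
    (f : EuclideanSpace ℝ (Fin n) → ℂ) (hf : Continuous f)
    (C : ℝ) (hC : ∀ x, ‖f x‖ ≤ C) (v : EuclideanSpace ℝ (Fin n)) :
    Tendsto (fun ε : ℝ =>
        ((|LinearMap.det (M : EuclideanSpace ℝ (Fin n) →ₗ[ℝ] EuclideanSpace ℝ (Fin n))| /
            (2 * Real.pi) ^ (n : ℝ) : ℝ) : ℂ) *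
          ∫ p : EuclideanSpace ℝ (Fin n) × EuclideanSpace ℝ (Fin n),
            f p.1 * Complex.exp (Complex.I * ((inner ℝ p.2 v : ℝ) : ℂ)) *
              Complex.exp (-((ε * (‖p.1‖ ^ 2 + ‖p.2‖ ^ 2) : ℝ) : ℂ)) *
              Complex.exp (Complex.I * ((inner ℝ p.2 (M p.1) : ℝ) : ℂ)))
      (𝓝[>] (0 : ℝ)) (𝓝 (f (-(M.symm v)))) := by
  refine (tendsto_abs_det_smul_integral_heatKernel M hf hC v).congr' ?_
  filter_upwards [self_mem_nhdsWithin] with ε hε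
  have hfubini := integral_prod_eq_integral_heatKernel M.toLinearMap hf hC v hε
  simp only [LinearEquiv.coe_coe] at hfubini
  rw [hfubini, finrank_euclideanSpace_fin, rpow_natCast, Complex.real_smul, Complex.real_smul,
    ← mul_assoc, ← ofReal_mul, div_mul_cancel₀ _ (by positivity)]
end

section
/- Let V₀ be a finite-dimensional real inner product space, Γ ⊂ V₀ a full-rank lattice, and f: V₀ → ℂ a continuous Γ-periodic function. Then lim_{ε→0⁺} (ε/π)^{d₀/2} ∫_{V₀} e^{−ε‖x‖²} f(x) dx exists and equals (1/vol(Q)) ∫_Q f(x) dx, where d₀ = dim V₀, Q is a fundamental parallelepiped {Σᵢ xᵢeᵢ : 0 ≤ xᵢ ≤ 1} for a basis (eᵢ) of Γ, and vol(Q) is its Lebesgue volume. -/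
/-
Periodicity lets `f` descend, through the coordinates of `b` taken modulo `ℤ`, to a continuous
function `F` on the torus `ℝᵈ/ℤᵈ`. Both sides then become integrals of `F`: against the
push-forward of the Gaussian probability measures `(ε/π)^{d/2} e^{-ε‖x‖²} dx`, and against Haar
measure on the torus (in `b`-coordinates the parallelepiped is the unit cube). Integration
against a probability measure is `1`-Lipschitz on `C(𝕋ᵈ, ℂ)`, so it suffices to check
convergence on the dense span of the characters. The character `e^{2πi⟪w, x⟫}` has Gaussian
integral `e^{-π²‖w‖²/ε}`, which tends to `1` if `w = 0` and to `0` otherwise.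
-/

open MeasureTheory Filter Topology Set Complex Module Real UnitAddTorus
open scoped RealInnerProductSpace

section WeakConvergence

variable {ι X Y : Type*}

theorem tendsto_of_mem_closure_of_lipschitzWith [PseudoMetricSpace X] [PseudoMetricSpace Y]
    {l : Filter ι} {L : ι → X → Y} {A : X → Y} {K : NNReal}
    (hL : ∀ᶠ i in l, LipschitzWith K (L i)) (hA : LipschitzWith K A) {s : Set X}
    (hs : ∀ y ∈ s, Tendsto (L · y) l (𝓝 (A y))) {x : X} (hx : x ∈ closure s) :
    Tendsto (L · x) l (𝓝 (A x)) := by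
  rw [Metric.tendsto_nhds]
  intro δ hδ
  have hK : 0 < 3 * ((K : ℝ) + 1) := by positivity
  obtain ⟨y, hys, hxy⟩ := Metric.mem_closure_iff.mp hx (δ / (3 * (K + 1))) (div_pos hδ hK)
  filter_upwards [hL, Metric.tendsto_nhds.mp (hs y hys) (δ / 3) (by positivity)]
    with i hLi hi
  have hKxy : (K : ℝ) * dist x y ≤ δ / 3 := by
    calc (K : ℝ) * dist x y ≤ (K + 1) * (δ / (3 * (K + 1))) := by gcongr; linarith
      _ = δ / 3 := by field_simp
  calc dist (L i x) (A x) ≤ dist (L i x) (L i y) + dist (L i y) (A y) + dist (A y) (A x) :=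
        dist_triangle4 _ _ _ _
    _ ≤ K * dist x y + dist (L i y) (A y) + K * dist y x := by
        gcongr
        exacts [hLi.dist_le_mul x y, hA.dist_le_mul y x]
    _ < δ := by rw [dist_comm y x]; linarith

variable [TopologicalSpace X] [CompactSpace X] [MeasurableSpace X] [OpensMeasurableSpace X]

theorem ContinuousMap.integrable_of_compactSpace (μ : Measure X) [IsFiniteMeasure μ]
    (F : C(X, ℂ)) : Integrable F μ :=
  (BoundedContinuousFunction.mkOfCompact F).integrable μ

theorem lipschitzWith_integral (μ : Measure X) [IsProbabilityMeasure μ] :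
    LipschitzWith 1 fun F : C(X, ℂ) => ∫ x, F x ∂μ := by
  refine LipschitzWith.of_dist_le_mul fun F G => ?_
  rw [dist_eq_norm, dist_eq_norm, NNReal.coe_one, one_mul, ← integral_sub
    (F.integrable_of_compactSpace μ) (G.integrable_of_compactSpace μ),
    ← BoundedContinuousFunction.norm_mkOfCompact]
  exact (BoundedContinuousFunction.mkOfCompact (F - G)).norm_integral_le_norm μ

theorem tendsto_integral_of_dense_span {l : Filter ι} {μ : ι → Measure X}
    (hμ : ∀ᶠ i in l, IsProbabilityMeasure (μ i)) (ν : Measure X) [IsProbabilityMeasure ν]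
    {s : Set C(X, ℂ)} (hs : (Submodule.span ℂ s).topologicalClosure = ⊤)
    (h : ∀ F ∈ s, Tendsto (fun i => ∫ x, F x ∂μ i) l (𝓝 (∫ x, F x ∂ν))) (F : C(X, ℂ)) :
    Tendsto (fun i => ∫ x, F x ∂μ i) l (𝓝 (∫ x, F x ∂ν)) := by
  have hspan : ∀ G ∈ Submodule.span ℂ s,
      Tendsto (fun i => ∫ x, G x ∂μ i) l (𝓝 (∫ x, G x ∂ν)) := by
    intro G hG
    induction hG using Submodule.span_induction with
    | mem G hG => exact h G hG
    | zero => simpa using tendsto_const_nhds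
    | add G H _ _ hG hH =>
      simp only [ContinuousMap.add_apply]
      rw [integral_add (G.integrable_of_compactSpace ν) (H.integrable_of_compactSpace ν)]
      refine (hG.add hH).congr' (hμ.mono fun i hi => ?_)
      exact (integral_add (G.integrable_of_compactSpace _) (H.integrable_of_compactSpace _)).symm
    | smul c G _ hG => simpa [integral_const_mul] using hG.const_smul c
  have hF : F ∈ closure (Submodule.span ℂ s : Set C(X, ℂ)) := by
    rw [← Submodule.topologicalClosure_coe, hs]
    trivial
  exact tendsto_of_mem_closure_of_lipschitzWith (hμ.mono fun i _ => lipschitzWith_integral (μ i))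
    (lipschitzWith_integral ν) hspan hF

end WeakConvergence

instance UnitAddCircle.isProbabilityMeasure_volume :
    IsProbabilityMeasure (volume : Measure UnitAddCircle) :=
  ⟨UnitAddCircle.measure_univ⟩

theorem UnitAddCircle.integral_fourier (n : ℤ) :
    ∫ t : UnitAddCircle, fourier n t = if n = 0 then 1 else 0 := by
  split_ifs with hn
  · simp [hn, Measure.real]
  · exact integral_eq_zero_of_add_right_eq_neg (fourier_add_half_inv_index hn one_pos)

theorem UnitAddTorus.integral_mFourier {ι : Type*} [Fintype ι] (n : ι → ℤ) :
    ∫ x : UnitAddTorus ι, mFourier n x = if n = 0 then 1 else 0 := by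
  simp only [mFourier, ContinuousMap.coe_mk, volume_pi]
  rw [integral_fintype_prod_eq_prod (fun i t => fourier (n i) t)]
  simp_rw [UnitAddCircle.integral_fourier]
  simp [Finset.prod_ite_zero, funext_iff]

theorem UnitAddTorus.measurePreserving_coe_Icc {ι : Type*} [Fintype ι] :
    MeasurePreserving (fun t : ι → ℝ => fun i => (t i : UnitAddCircle))
      (volume.restrict (Icc 0 1)) volume := by
  have h := measurePreserving_pi _ _ fun _ : ι => UnitAddCircle.measurePreserving_mk 0
  simp only [zero_add] at h
  rw [← Measure.restrict_pi_pi, ← volume_pi, ← volume_pi] at h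
  rwa [show volume.restrict (univ.pi fun _ : ι => Ioc (0 : ℝ) 1) = volume.restrict (Icc 0 1) from
    Measure.restrict_congr_set Measure.univ_pi_Ioc_ae_eq_Icc] at h

theorem Function.Periodic.sum_zsmul {ι V E : Type*} [AddCommGroup V] {f : V → E} {v : ι → V}
    (hf : ∀ i, Function.Periodic f (v i)) (s : Finset ι) (n : ι → ℤ) :
    Function.Periodic f (∑ i ∈ s, n i • v i) :=
  Finset.sum_induction _ _ (fun _ _ => Function.Periodic.add_period)
    (fun x => congrArg f (add_zero x)) fun i _ => (hf i).zsmul (n i)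

namespace Module.Basis

variable {ι V : Type*} [Fintype ι] [NormedAddCommGroup V] [NormedSpace ℝ V] (b : Basis ι ℝ V)

noncomputable def toUnitAddTorus : C(V, UnitAddTorus ι) :=
  ⟨fun x i => (b.equivFunL x i : UnitAddCircle), by fun_prop⟩

theorem toUnitAddTorus_apply (x : V) (i : ι) :
    b.toUnitAddTorus x i = (b.equivFun x i : UnitAddCircle) := rfl

theorem toUnitAddTorus_equivFun_symm (t : ι → ℝ) :
    b.toUnitAddTorus (b.equivFun.symm t) = fun i => (t i : UnitAddCircle) := by
  ext i
  rw [toUnitAddTorus_apply, LinearEquiv.apply_symm_apply]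

theorem isOpenQuotientMap_toUnitAddTorus : IsOpenQuotientMap b.toUnitAddTorus :=
  (IsOpenQuotientMap.piMap fun _ => QuotientAddGroup.isOpenQuotientMap_mk).comp
    b.equivFunL.toHomeomorph.isOpenQuotientMap

theorem exists_add_sum_zsmul_of_toUnitAddTorus_eq {x y : V}
    (h : b.toUnitAddTorus x = b.toUnitAddTorus y) : ∃ n : ι → ℤ, y = x + ∑ i, n i • b i := by
  have hcoord : ∀ i, ∃ k : ℤ, b.equivFun y i - b.equivFun x i = k := by
    intro i
    obtain ⟨k, hk⟩ := QuotientAddGroup.eq_iff_sub_mem.mp (congrFun h i).symm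
    exact ⟨k, by simpa using hk.symm⟩
  choose n hn using hcoord
  refine ⟨n, ?_⟩
  calc y = x + (y - x) := (add_sub_cancel x y).symm
    _ = x + ∑ i, n i • b i := by
      rw [← b.sum_equivFun y, ← b.sum_equivFun x, ← Finset.sum_sub_distrib]
      simp_rw [← sub_smul, hn, Int.cast_smul_eq_zsmul]

theorem exists_continuousMap_comp_toUnitAddTorus_eq {E : Type*} [TopologicalSpace E] {f : V → E}
    (hf : Continuous f) (hper : ∀ i, Function.Periodic f (b i)) :
    ∃ F : C(UnitAddTorus ι, E), ∀ x, F (b.toUnitAddTorus x) = f x := by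
  have hq := b.isOpenQuotientMap_toUnitAddTorus.isQuotientMap
  have hfib : Function.FactorsThrough f b.toUnitAddTorus := fun x y hxy => by
    obtain ⟨n, rfl⟩ := b.exists_add_sum_zsmul_of_toUnitAddTorus_eq hxy
    exact (Function.Periodic.sum_zsmul hper _ n x).symm
  exact ⟨hq.lift ⟨f, hf⟩ hfib, fun x => DFunLike.congr_fun (hq.lift_comp ⟨f, hf⟩ hfib) x⟩

theorem parallelepiped_eq_image_equivFun_symm :
    _root_.parallelepiped b = b.equivFun.symm '' Icc 0 1 := by
  simp only [_root_.parallelepiped, equivFun_symm_apply]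

variable [MeasurableSpace V] [BorelSpace V] [FiniteDimensional ℝ V]

theorem measurePreserving_equivFunL_symm :
    MeasurePreserving b.equivFunL.symm volume b.addHaar := by
  refine ⟨b.equivFunL.symm.continuous.measurable, ?_⟩
  rw [← addHaarMeasure_eq_volume_pi, ← parallelepiped_basisFun, ← addHaar_def, map_addHaar]
  congr 1
  ext i
  classical
  change b.equivFun.symm (Pi.single i 1) = b i
  simp

theorem setAverage_parallelepiped {E : Type*} [NormedAddCommGroup E] [NormedSpace ℝ E]
    (μ : Measure V) [μ.IsAddHaarMeasure] (g : V → E) :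
    ⨍ x in _root_.parallelepiped b, g x ∂μ = ∫ t in Icc 0 1, g (b.equivFun.symm t) := by
  -- `μ` is a multiple of `b.addHaar`, which is Lebesgue measure in `b`-coordinates.
  have hμ := Measure.isAddLeftInvariant_eq_smul μ b.addHaar
  set c := Measure.addHaarScalarFactor μ b.addHaar
  have hc : (c : ℝ) ≠ 0 := NNReal.coe_ne_zero.mpr
    (Measure.addHaarScalarFactor_pos_of_isAddHaarMeasure μ b.addHaar).ne'
  have hP : b.equivFunL.symm ⁻¹' _root_.parallelepiped b = Icc 0 1 := by
    rw [parallelepiped_eq_image_equivFun_symm]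
    exact b.equivFun.symm.injective.preimage_image _
  rw [setAverage_eq, hμ, measureReal_nnreal_smul_apply, Measure.restrict_smul,
    integral_smul_nnreal_measure, ← b.measurePreserving_equivFunL_symm.setIntegral_preimage_emb
      b.equivFunL.symm.toHomeomorph.measurableEmbedding, hP, measureReal_def, addHaar_self,
    ENNReal.toReal_one, mul_one, NNReal.smul_def, smul_smul, inv_mul_cancel₀ hc, one_smul]
  rfl

end Module.Basis

theorem Real.tendsto_exp_neg_div_nhdsGT_zero {a : ℝ} (ha : 0 < a) :
    Tendsto (fun ε => Real.exp (-a / ε)) (𝓝[>] 0) (𝓝 0) := by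
  have h : Tendsto (fun ε : ℝ => -(a * ε⁻¹)) (𝓝[>] 0) atBot :=
    tendsto_neg_atTop_atBot.comp (tendsto_inv_nhdsGT_zero.const_mul_atTop ha)
  refine (Real.tendsto_exp_atBot.comp h).congr fun ε => ?_
  simp [div_eq_mul_inv]

section GaussianMeasure

variable {V : Type*} [NormedAddCommGroup V] [InnerProductSpace ℝ V] [FiniteDimensional ℝ V]
  [MeasurableSpace V] [BorelSpace V]

noncomputable def gaussianMeasure (ε : ℝ) : Measure V :=
  volume.withDensity fun x =>
    ENNReal.ofReal ((ε / π) ^ (finrank ℝ V / 2 : ℝ) * Real.exp (-ε * ‖x‖ ^ 2))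

theorem integral_gaussianMeasure {ε : ℝ} (hε : 0 < ε) (g : V → ℂ) :
    ∫ x, g x ∂gaussianMeasure ε =
      ((ε / π) ^ (finrank ℝ V / 2 : ℝ) : ℝ) • ∫ x, cexp (-((ε * ‖x‖ ^ 2 : ℝ) : ℂ)) * g x := by
  rw [gaussianMeasure, integral_withDensity_eq_integral_toReal_smul (by fun_prop)
    (ae_of_all _ fun _ => ENNReal.ofReal_lt_top), ← integral_smul]
  refine integral_congr_ae (ae_of_all _ fun x => ?_)
  dsimp only
  rw [ENNReal.toReal_ofReal (by positivity), mul_smul, Complex.real_smul (x := rexp _),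
    Complex.ofReal_exp]
  push_cast
  ring_nf

theorem Complex.ofReal_div_rpow_mul_div_cpow_eq_one {a b : ℝ} (ha : 0 < a) (hb : 0 < b) (s : ℝ) :
    ((a / b) ^ s : ℝ) * ((b : ℂ) / a) ^ (s : ℂ) = 1 := by
  have h : a / b * (b / a) = 1 := by field_simp
  rw [← ofReal_div, ← ofReal_cpow (by positivity), ← ofReal_mul, ← Real.mul_rpow (by positivity)
    (by positivity), h, Real.one_rpow, ofReal_one]

theorem integral_cexp_inner_gaussianMeasure {ε : ℝ} (hε : 0 < ε) (w : V) :
    ∫ x, cexp (2 * π * I * ⟪w, x⟫) ∂gaussianMeasure ε = Real.exp (-(π ^ 2 * ‖w‖ ^ 2) / ε) := by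
  set c : ℝ := (ε / π) ^ (finrank ℝ V / 2 : ℝ)
  have hexp : ((finrank ℝ V : ℂ) / 2) = ((finrank ℝ V / 2 : ℝ) : ℂ) := by push_cast; rfl
  calc ∫ x, cexp (2 * π * I * ⟪w, x⟫) ∂gaussianMeasure ε
      = c • ∫ x, cexp (-ε * ‖x‖ ^ 2 + 2 * π * I * ⟪w, x⟫) := by
        rw [integral_gaussianMeasure hε]
        congr 1
        refine integral_congr_ae (ae_of_all _ fun x => ?_)
        dsimp only
        rw [← Complex.exp_add]
        push_cast
        ring_nf
    _ = c • ((π / ε) ^ (finrank ℝ V / 2 : ℂ) * cexp ((2 * π * I) ^ 2 * ‖w‖ ^ 2 / (4 * ε))) := by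
        rw [GaussianFourier.integral_cexp_neg_mul_sq_norm_add (by simpa using hε)]
    _ = cexp ((2 * π * I) ^ 2 * ‖w‖ ^ 2 / (4 * ε)) := by
        rw [Complex.real_smul, ← mul_assoc, hexp,
          Complex.ofReal_div_rpow_mul_div_cpow_eq_one hε Real.pi_pos, one_mul]
    _ = Real.exp (-(π ^ 2 * ‖w‖ ^ 2) / ε) := by
        rw [Complex.ofReal_exp]
        congr 1
        push_cast
        field_simp
        rw [I_sq]
        ring

theorem isProbabilityMeasure_gaussianMeasure {ε : ℝ} (hε : 0 < ε) :
    IsProbabilityMeasure (gaussianMeasure ε : Measure V) := by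
  have h := integral_cexp_inner_gaussianMeasure hε (0 : V)
  simp at h
  exact ⟨(ENNReal.toReal_eq_one_iff _).mp h⟩

theorem tendsto_integral_cexp_inner_gaussianMeasure {w : V} (hw : w ≠ 0) :
    Tendsto (fun ε => ∫ x, cexp (2 * π * I * ⟪w, x⟫) ∂gaussianMeasure ε) (𝓝[>] 0) (𝓝 0) := by
  refine Tendsto.congr' (eventually_mem_nhdsWithin.mono fun ε (hε : 0 < ε) =>
    (integral_cexp_inner_gaussianMeasure hε w).symm) ?_
  have := Real.tendsto_exp_neg_div_nhdsGT_zero (a := π ^ 2 * ‖w‖ ^ 2) (by positivity)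
  exact_mod_cast (Complex.continuous_ofReal.tendsto 0).comp this

end GaussianMeasure

namespace Module.Basis

variable {ι V : Type*} [Fintype ι] [NormedAddCommGroup V] [InnerProductSpace ℝ V]
  [FiniteDimensional ℝ V] (b : Basis ι ℝ V)

noncomputable def dualLatticeVector (n : ι → ℤ) : V :=
  (InnerProductSpace.toDual ℝ V).symm
    (LinearMap.toContinuousLinearMap (∑ i, (n i : ℝ) • b.coord i))

theorem inner_dualLatticeVector (n : ι → ℤ) (x : V) :
    ⟪b.dualLatticeVector n, x⟫ = ∑ i, n i * b.equivFun x i := by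
  rw [dualLatticeVector, InnerProductSpace.toDual_symm_apply]
  simp

theorem dualLatticeVector_ne_zero {n : ι → ℤ} (hn : n ≠ 0) : b.dualLatticeVector n ≠ 0 := by
  intro h
  apply hn
  funext i
  have := b.inner_dualLatticeVector n (b i)
  classical
  simp [h] at this
  exact_mod_cast this.symm

theorem mFourier_toUnitAddTorus (n : ι → ℤ) (x : V) :
    mFourier n (b.toUnitAddTorus x) = cexp (2 * π * I * ⟪b.dualLatticeVector n, x⟫) := by
  simp only [mFourier, ContinuousMap.coe_mk, toUnitAddTorus_apply, fourier_coe_apply,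
    ← Complex.exp_sum, inner_dualLatticeVector]
  push_cast
  rw [Finset.mul_sum]
  congr 1
  refine Finset.sum_congr rfl fun i _ => ?_
  ring

variable [MeasurableSpace V] [BorelSpace V]

theorem tendsto_integral_map_gaussianMeasure (F : C(UnitAddTorus ι, ℂ)) :
    Tendsto (fun ε => ∫ y, F y ∂(gaussianMeasure ε).map b.toUnitAddTorus) (𝓝[>] 0)
      (𝓝 (∫ y, F y)) := by
  have hprob : ∀ᶠ ε in 𝓝[>] (0 : ℝ),
      IsProbabilityMeasure ((gaussianMeasure ε : Measure V).map b.toUnitAddTorus) :=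
    eventually_mem_nhdsWithin.mono fun ε (hε : 0 < ε) =>
      have := isProbabilityMeasure_gaussianMeasure (V := V) hε
      Measure.isProbabilityMeasure_map b.toUnitAddTorus.continuous.aemeasurable
  refine tendsto_integral_of_dense_span hprob volume span_mFourier_closure_eq_top ?_ F
  rintro _ ⟨n, rfl⟩
  rw [integral_mFourier]
  split_ifs with hn
  · subst hn
    refine tendsto_const_nhds.congr' (hprob.mono fun ε hε => ?_)
    simp [mFourier_zero]
  · simp_rw [integral_map b.toUnitAddTorus.continuous.aemeasurable
      (mFourier n).continuous.aestronglyMeasurable, mFourier_toUnitAddTorus]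
    exact tendsto_integral_cexp_inner_gaussianMeasure (b.dualLatticeVector_ne_zero hn)

end Module.Basis

/-- If `Γ` is the full-rank lattice generated by a basis `b` of `V₀ = ℝ^{d₀}` and
`f` is a continuous `Γ`-periodic function, then
`lim_{ε→0⁺} (ε/π)^{d₀/2} ∫ e^{−ε‖x‖²} f(x) dx = (1/vol(Q)) ∫_Q f(x) dx`,
where `Q` is the fundamental parallelepiped of the basis. -/
theorem stmt_8 (d : ℕ)
    (b : Module.Basis (Fin d) ℝ (EuclideanSpace ℝ (Fin d)))
    (f : EuclideanSpace ℝ (Fin d) → ℂ) (hf : Continuous f)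
    (hper : ∀ (i : Fin d) (x : EuclideanSpace ℝ (Fin d)), f (x + b i) = f x) :
    Tendsto (fun ε : ℝ =>
        ((ε / Real.pi) ^ ((d : ℝ) / 2) : ℝ) •
          ∫ x : EuclideanSpace ℝ (Fin d),
            Complex.exp (-((ε * ‖x‖ ^ 2 : ℝ) : ℂ)) * f x)
      (𝓝[>] (0 : ℝ))
      (𝓝 (((volume (parallelepiped ⇑b)).toReal)⁻¹ •
        ∫ x in parallelepiped ⇑b, f x)) := by
  obtain ⟨F, hF⟩ := b.exists_continuousMap_comp_toUnitAddTorus_eq hf hper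
  have hgauss : ∀ ε > 0, ∫ y, F y ∂(gaussianMeasure ε).map b.toUnitAddTorus =
      ((ε / π) ^ ((d : ℝ) / 2) : ℝ) • ∫ x, cexp (-((ε * ‖x‖ ^ 2 : ℝ) : ℂ)) * f x := by
    intro ε hε
    rw [integral_map b.toUnitAddTorus.continuous.aemeasurable F.continuous.aestronglyMeasurable,
      integral_gaussianMeasure hε, finrank_euclideanSpace_fin]
    simp_rw [hF]
  have haverage : ∫ y, F y =
      ((volume (parallelepiped ⇑b)).toReal)⁻¹ • ∫ x in parallelepiped ⇑b, f x := by
    rw [← measureReal_def, ← setAverage_eq, b.setAverage_parallelepiped,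
      ← measurePreserving_coe_Icc.map_eq,
      integral_map measurePreserving_coe_Icc.aemeasurable F.continuous.aestronglyMeasurable]
    simp_rw [← hF, b.toUnitAddTorus_equivFun_symm]
  rw [← haverage]
  exact (b.tendsto_integral_map_gaussianMeasure F).congr' (eventually_mem_nhdsWithin.mono hgauss)
end

section
/- Let dμ be a normalized non-degenerate centered oscillatory Gauss measure on a finite-dimensional real inner product space V (dμ(x) = (1/Z)e^{−(i/2)⟨x,Sx⟩}dx with S symmetric invertible, Z chosen so ∫_∼1 dμ = 1), and let Y: V → ℝ be an affine map with ∫_∼ Y² dμ = (∫_∼ Y dμ)². Then for every n ∈ ℕ, ∫_∼ Yⁿ dμ = (∫_∼ Y dμ)ⁿ, and ∫_∼ e^{Y} dμ = exp(∫_∼ Y dμ), where ∫_∼ f dμ := lim_{ε→0⁺} ∫ f(x) e^{−ε‖x‖²} dμ(x). -/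
/-!
In an orthonormal eigenbasis of `S` the regulated weight `e^{-ε‖x‖²} e^{-(i/2)⟨x,Sx⟩}` becomes the
product Gaussian `exp (-∑ aₖ yₖ²)` with `aₖ = ε + i λₖ / 2`, so `Re aₖ = ε > 0`, and `Y` becomes an
affine function `∑ wₖ yₖ + c`. Its generating function is explicit,
`∫ e^{tY} = Z(a) exp (c t + s(a) t²)` with `s(a) = ∑ wₖ² / (4 aₖ)`, and comparing power series
coefficients (dominated convergence justifies integrating the exponential series termwise) gives
`∫ Yⁿ = n! Z(a) · [tⁿ] exp (c t + s(a) t²)`. Everything is continuous as `ε → 0⁺`, where the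
normalisation cancels `Z(a)`. The first two moments are then `c` and `c² + 2 s₀`, so `m₂ = m₁²`
forces `s₀ = 0`, and the generating function collapses to `exp (c t)`.
-/

open MeasureTheory Filter Topology Complex Finset
open scoped Nat Real

noncomputable section

namespace OscillatoryGauss

theorem eq_of_hasSum_pow {f : ℂ → ℂ} {p q : ℕ → ℂ}
    (hp : ∀ t, HasSum (fun n => p n * t ^ n) (f t))
    (hq : ∀ t, HasSum (fun n => q n * t ^ n) (f t)) : p = q := by
  have hseries : ∀ r : ℕ → ℂ, (∀ t, HasSum (fun n => r n * t ^ n) (f t)) →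
      HasFPowerSeriesAt f (FormalMultilinearSeries.ofScalars ℂ r) 0 := fun r hr => by
    rw [hasFPowerSeriesAt_iff]
    filter_upwards with z
    simpa [smul_eq_mul, mul_comm] using hr z
  funext n
  simpa using congrArg (·.coeff n) ((hseries p hp).eq_formalMultilinearSeries (hseries q hq))

/-- The coefficients of `t ↦ exp (s * t ^ 2)`. -/
def evenExpCoeff {K : Type*} [RCLike K] (s : K) (n : ℕ) : K :=
  if Even n then s ^ (n / 2) / (n / 2)! else 0

theorem hasSum_evenExpCoeff {K : Type*} [RCLike K] (s t : K) :
    HasSum (fun n => evenExpCoeff s n * t ^ n) (NormedSpace.exp (s * t ^ 2)) := by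
  have hinj : Function.Injective (fun m : ℕ => 2 * m) := fun a b h => by simpa using h
  refine (hinj.hasSum_iff fun n hn => ?_).mp ?_
  · have hodd : ¬ Even n := fun ⟨m, hm⟩ => hn ⟨m, by simp only; omega⟩
    simp [evenExpCoeff, hodd]
  · convert NormedSpace.expSeries_div_hasSum_exp (s * t ^ 2) using 2 with m
    simp [evenExpCoeff, mul_pow, pow_mul, mul_div_right_comm]

theorem norm_evenExpCoeff (s : ℂ) (n : ℕ) : ‖evenExpCoeff s n‖ = evenExpCoeff ‖s‖ n := by
  by_cases hn : Even n <;> simp [evenExpCoeff, hn]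

/-- The coefficients of `t ↦ exp (c * t + s * t ^ 2)`, as a Cauchy product. -/
def gaussCoeff (c s : ℂ) (n : ℕ) : ℂ :=
  ∑ kl ∈ antidiagonal n, c ^ kl.1 / kl.1 ! * evenExpCoeff s kl.2

theorem hasSum_gaussCoeff (c s t : ℂ) :
    HasSum (fun n => gaussCoeff c s n * t ^ n) (exp (c * t + s * t ^ 2)) := by
  set f : ℕ → ℂ := fun n => c ^ n / n ! * t ^ n
  set g : ℕ → ℂ := fun n => evenExpCoeff s n * t ^ n
  have hf : HasSum f (exp (c * t)) := by
    simpa [f, exp_eq_exp_ℂ, mul_pow, mul_div_right_comm] using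
      NormedSpace.expSeries_div_hasSum_exp (c * t)
  have hg : HasSum g (exp (s * t ^ 2)) := by
    simpa [g, exp_eq_exp_ℂ] using hasSum_evenExpCoeff s t
  have hf_norm : Summable fun n => ‖f n‖ := by
    simpa [f, mul_pow, mul_div_right_comm] using
      (NormedSpace.expSeries_div_hasSum_exp (‖c‖ * ‖t‖)).summable
  have hg_norm : Summable fun n => ‖g n‖ := by
    simpa [g, norm_evenExpCoeff] using (hasSum_evenExpCoeff ‖s‖ ‖t‖).summable
  have hterm : (fun n => gaussCoeff c s n * t ^ n) =
      fun n => ∑ kl ∈ antidiagonal n, f kl.1 * g kl.2 := by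
    funext n
    rw [gaussCoeff, sum_mul]
    refine sum_congr rfl fun kl hkl => ?_
    rw [← mem_antidiagonal.mp hkl, pow_add]
    ring
  rw [hterm, exp_add, ← hf.tsum_eq, ← hg.tsum_eq,
    tsum_mul_tsum_eq_tsum_sum_antidiagonal_of_summable_norm hf_norm hg_norm]
  exact (summable_norm_sum_mul_antidiagonal_of_summable_norm hf_norm hg_norm).of_norm.hasSum

theorem gaussCoeff_one (c s : ℂ) : gaussCoeff c s 1 = c := by
  simp [gaussCoeff, Nat.sum_antidiagonal_eq_sum_range_succ_mk, sum_range_succ, evenExpCoeff]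

theorem gaussCoeff_two (c s : ℂ) : gaussCoeff c s 2 = c ^ 2 / 2 + s := by
  simp [gaussCoeff, Nat.sum_antidiagonal_eq_sum_range_succ_mk, sum_range_succ, evenExpCoeff,
    add_comm]

theorem gaussCoeff_zero_right (c : ℂ) (n : ℕ) : gaussCoeff c 0 n = c ^ n / n ! := by
  rw [gaussCoeff, sum_eq_single_of_mem (n, 0) (by simp)]
  · simp [evenExpCoeff]
  · rintro ⟨k, j⟩ hkj hne
    have hj : j ≠ 0 := fun h => hne (by simp_all)
    by_cases hj2 : Even j
    · have hj2' : j / 2 ≠ 0 := by obtain ⟨m, rfl⟩ := hj2; omega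
      simp [evenExpCoeff, hj2, hj2']
    · simp [evenExpCoeff, hj2]

theorem continuous_gaussCoeff (c : ℂ) (n : ℕ) : Continuous fun s => gaussCoeff c s n := by
  refine continuous_finsetSum _ fun kl _ => continuous_const.mul ?_
  unfold evenExpCoeff
  split_ifs <;> fun_prop

section GaussianIntegrals

variable {ι : Type*} [Fintype ι]

/-- `∫ exp (-∑ aᵢ yᵢ²) dy`. -/
def gaussPartition (a : ι → ℂ) : ℂ := ∏ i, (π / a i) ^ (1 / 2 : ℂ)

/-- Half the variance of `y ↦ ∑ wᵢ yᵢ` under the (complex) Gaussian weight `exp (-∑ aᵢ yᵢ²)`. -/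
def gaussHalfVar (a : ι → ℂ) (w : ι → ℝ) : ℂ := ∑ i, (w i : ℂ) ^ 2 / (4 * a i)

theorem cexp_mul_affine_mul_gaussian (a : ι → ℂ) (w : ι → ℝ) (c : ℝ) (t : ℂ) (y : ι → ℝ) :
    exp (t * ((∑ i, w i * y i + c : ℝ) : ℂ)) * exp (-∑ i, a i * (y i : ℂ) ^ 2) =
      exp (c * t) * exp (-∑ i, a i * (y i : ℂ) ^ 2 + ∑ i, t * w i * y i) := by
  rw [← exp_add, ← exp_add]
  push_cast
  rw [mul_add, mul_sum]
  ring_nf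

theorem integrable_cexp_mul_affine_mul_gaussian {a : ι → ℂ} (ha : ∀ i, 0 < (a i).re)
    (w : ι → ℝ) (c : ℝ) (t : ℂ) :
    Integrable fun y : ι → ℝ =>
      exp (t * ((∑ i, w i * y i + c : ℝ) : ℂ)) * exp (-∑ i, a i * (y i : ℂ) ^ 2) := by
  simp_rw [cexp_mul_affine_mul_gaussian]
  exact (GaussianFourier.integrable_cexp_neg_sum_mul_add ha _).const_mul _

theorem integral_cexp_mul_affine_mul_gaussian {a : ι → ℂ} (ha : ∀ i, 0 < (a i).re)
    (w : ι → ℝ) (c : ℝ) (t : ℂ) :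
    ∫ y : ι → ℝ, exp (t * ((∑ i, w i * y i + c : ℝ) : ℂ)) * exp (-∑ i, a i * (y i : ℂ) ^ 2) =
      gaussPartition a * exp (c * t + gaussHalfVar a w * t ^ 2) := by
  simp_rw [cexp_mul_affine_mul_gaussian]
  have hvar : ∑ i, (t * w i) ^ 2 / (4 * a i) = gaussHalfVar a w * t ^ 2 := by
    rw [gaussHalfVar, sum_mul]
    exact sum_congr rfl fun i _ => by ring
  rw [integral_const_mul, GaussianFourier.integral_cexp_neg_sum_mul_add ha, prod_mul_distrib,
    ← exp_sum, hvar, exp_add, gaussPartition]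
  ring

theorem integrable_exp_mul_abs_affine_mul_gaussian {a : ι → ℂ} (ha : ∀ i, 0 < (a i).re)
    (w : ι → ℝ) (c r : ℝ) :
    Integrable fun y : ι → ℝ =>
      Real.exp (r * |∑ i, w i * y i + c|) * ‖exp (-∑ i, a i * (y i : ℂ) ^ 2)‖ := by
  have hnorm : ∀ (s : ℝ) (y : ι → ℝ),
      ‖exp ((s : ℂ) * ((∑ i, w i * y i + c : ℝ) : ℂ)) * exp (-∑ i, a i * (y i : ℂ) ^ 2)‖ =
        Real.exp (s * (∑ i, w i * y i + c)) * ‖exp (-∑ i, a i * (y i : ℂ) ^ 2)‖ := by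
    intro s y
    rw [norm_mul, norm_exp, ← ofReal_mul, ofReal_re]
  refine ((integrable_cexp_mul_affine_mul_gaussian ha w c r).norm.add
    (integrable_cexp_mul_affine_mul_gaussian ha w c (-r : ℝ)).norm).mono'
    (Continuous.aestronglyMeasurable (by fun_prop)) (ae_of_all _ fun y => ?_)
  rw [Pi.add_apply, hnorm, hnorm, Real.norm_of_nonneg (by positivity), ← add_mul]
  refine mul_le_mul_of_nonneg_right ?_ (norm_nonneg _)
  rcases abs_choice (∑ i, w i * y i + c) with h | h <;> rw [h]
  · linarith [Real.exp_pos (-r * (∑ i, w i * y i + c))]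
  · rw [mul_neg, ← neg_mul]
    linarith [Real.exp_pos (r * (∑ i, w i * y i + c))]

theorem hasSum_integral_pow_affine_mul_gaussian {a : ι → ℂ} (ha : ∀ i, 0 < (a i).re)
    (w : ι → ℝ) (c : ℝ) (t : ℂ) :
    HasSum (fun n => (∫ y : ι → ℝ, ((∑ i, w i * y i + c : ℝ) : ℂ) ^ n *
        exp (-∑ i, a i * (y i : ℂ) ^ 2)) / n ! * t ^ n)
      (gaussPartition a * exp (c * t + gaussHalfVar a w * t ^ 2)) := by
  set L : (ι → ℝ) → ℝ := fun y => ∑ i, w i * y i + c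
  set G : (ι → ℝ) → ℂ := fun y => exp (-∑ i, a i * (y i : ℂ) ^ 2)
  have hnorm_sum : ∀ y, HasSum (fun n => ‖(t * L y) ^ n / n ! * G y‖)
      (Real.exp (‖t‖ * |∑ i, w i * y i + c|) * ‖G y‖) := fun y => by
    have := (NormedSpace.expSeries_div_hasSum_exp ‖t * L y‖).mul_right ‖G y‖
    simpa only [← Real.exp_eq_exp_ℝ, norm_mul, norm_div, norm_pow, norm_real, Real.norm_eq_abs,
      RCLike.norm_natCast] using this
  have hsum : ∀ y, HasSum (fun n => (t * L y) ^ n / n ! * G y) (exp (t * L y) * G y) :=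
    fun y => by
      simpa [exp_eq_exp_ℂ] using (NormedSpace.expSeries_div_hasSum_exp (t * L y)).mul_right (G y)
  have key := hasSum_integral_of_dominated_convergence
    (fun n y => ‖(t * L y) ^ n / n ! * G y‖)
    (fun n => Continuous.aestronglyMeasurable (by fun_prop)) (fun n => ae_of_all _ fun y => le_rfl)
    (ae_of_all _ fun y => (hnorm_sum y).summable)
    ((integrable_exp_mul_abs_affine_mul_gaussian ha w c ‖t‖).congr
      (ae_of_all _ fun y => (hnorm_sum y).tsum_eq.symm))
    (ae_of_all _ hsum)
  have hterm : (fun n => ∫ y, (t * L y) ^ n / n ! * G y) =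
      fun n => (∫ y, (L y : ℂ) ^ n * G y) / n ! * t ^ n := by
    funext n
    rw [← integral_div, ← integral_mul_const]
    congr 1 with y
    ring
  rwa [hterm, integral_cexp_mul_affine_mul_gaussian ha] at key

theorem integral_pow_affine_mul_gaussian {a : ι → ℂ} (ha : ∀ i, 0 < (a i).re)
    (w : ι → ℝ) (c : ℝ) (n : ℕ) :
    ∫ y : ι → ℝ, ((∑ i, w i * y i + c : ℝ) : ℂ) ^ n * exp (-∑ i, a i * (y i : ℂ) ^ 2) =
      n ! * (gaussPartition a * gaussCoeff c (gaussHalfVar a w) n) := by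
  have hseries : ∀ t : ℂ,
      HasSum (fun n => gaussPartition a * gaussCoeff c (gaussHalfVar a w) n * t ^ n)
        (gaussPartition a * exp (c * t + gaussHalfVar a w * t ^ 2)) := fun t => by
    simpa only [mul_assoc] using
      (hasSum_gaussCoeff c (gaussHalfVar a w) t).mul_left (gaussPartition a)
  have hcoeff := congrFun
    (eq_of_hasSum_pow (hasSum_integral_pow_affine_mul_gaussian ha w c) hseries) n
  rw [div_eq_iff (Nat.cast_ne_zero.mpr n.factorial_ne_zero)] at hcoeff
  rw [hcoeff, mul_comm]

end GaussianIntegrals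

section Coordinates

variable {E : Type*} [NormedAddCommGroup E] [InnerProductSpace ℝ E] {ι : Type*} [Fintype ι]

theorem integral_eq_integral_coord [FiniteDimensional ℝ E] [MeasurableSpace E] [BorelSpace E]
    (b : OrthonormalBasis ι ℝ E) (F : E → ℂ) :
    ∫ x, F x = ∫ y : ι → ℝ, F (b.repr.symm (WithLp.toLp 2 y)) := by
  have hφ := b.measurePreserving_repr_symm.comp (PiLp.volume_preserving_toLp ι)
  have hemb := b.repr.symm.toHomeomorph.measurableEmbedding.comp
    (MeasurableEquiv.toLp 2 (ι → ℝ)).measurableEmbedding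
  exact (hφ.integral_comp hemb F).symm

theorem inner_repr_symm_toLp (b : OrthonormalBasis ι ℝ E) (y z : ι → ℝ) :
    inner ℝ (b.repr.symm (WithLp.toLp 2 y)) (b.repr.symm (WithLp.toLp 2 z)) =
      ∑ i, y i * z i := by
  rw [LinearIsometryEquiv.inner_map_map, EuclideanSpace.inner_toLp_toLp]
  simp [dotProduct, mul_comm]

theorem inner_repr_symm_toLp_right (b : OrthonormalBasis ι ℝ E) (v : E) (y : ι → ℝ) :
    inner ℝ v (b.repr.symm (WithLp.toLp 2 y)) = ∑ i, b.repr v i * y i := by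
  conv_lhs => rw [← b.repr.symm_apply_apply v]
  exact inner_repr_symm_toLp b _ y

theorem norm_repr_symm_toLp_sq (b : OrthonormalBasis ι ℝ E) (y : ι → ℝ) :
    ‖b.repr.symm (WithLp.toLp 2 y)‖ ^ 2 = ∑ i, y i ^ 2 := by
  rw [← real_inner_self_eq_norm_sq, inner_repr_symm_toLp]
  simp [sq]

theorem inner_repr_symm_toLp_apply_of_eigen (S : E →ₗ[ℝ] E) (lam : ι → ℝ)
    (b : OrthonormalBasis ι ℝ E) (hdiag : ∀ i, S (b i) = lam i • b i) (y : ι → ℝ) :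
    inner ℝ (b.repr.symm (WithLp.toLp 2 y)) (S (b.repr.symm (WithLp.toLp 2 y))) =
      ∑ i, lam i * y i ^ 2 := by
  have hS : S (b.repr.symm (WithLp.toLp 2 y)) =
      b.repr.symm (WithLp.toLp 2 fun i => lam i * y i) := by
    simp only [← b.sum_repr_symm, map_sum, map_smul, hdiag, smul_smul, mul_comm]
  rw [hS, inner_repr_symm_toLp]
  exact sum_congr rfl fun i _ => by ring

end Coordinates

section Damping

variable {ι : Type*}

/-- The coefficients `ε + i λₖ / 2` of `yₖ²` in the exponent of `e^{-ε‖x‖²} e^{-(i/2)⟨x,Sx⟩}`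
in an eigenbasis of `S`. -/
def dampedCoeff (lam : ι → ℝ) (ε : ℝ) (i : ι) : ℂ := ε + lam i / 2 * I

theorem re_dampedCoeff (lam : ι → ℝ) (ε : ℝ) (i : ι) : (dampedCoeff lam ε i).re = ε := by
  simp [dampedCoeff]

theorem dampedCoeff_ne_zero {lam : ι → ℝ} (ε : ℝ) {i : ι} (hl : lam i ≠ 0) :
    dampedCoeff lam ε i ≠ 0 := fun h => hl (by simpa [dampedCoeff] using congrArg im h)

theorem pi_div_dampedCoeff_zero {lam : ι → ℝ} {i : ι} (hl : lam i ≠ 0) :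
    (π : ℂ) / dampedCoeff lam 0 i =
      ((2 * π / |lam i| : ℝ) : ℂ) * (-(Real.sign (lam i) : ℂ) * I) := by
  rw [div_eq_iff (dampedCoeff_ne_zero 0 hl), dampedCoeff]
  have hl' : (lam i : ℂ) ≠ 0 := ofReal_ne_zero.mpr hl
  rcases hl.lt_or_gt with h | h <;>
    [rw [Real.sign_of_neg h, abs_of_neg h]; rw [Real.sign_of_pos h, abs_of_pos h]] <;>
  · push_cast
    field_simp
    ring_nf
    simp [I_sq]

theorem ofReal_mul_sign_I_cpow_half {r : ℝ} (hr : 0 < r) {s : ℝ} (hs : s = -1 ∨ s = 1) :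
    ((r : ℂ) * (-(s : ℂ) * I)) ^ (1 / 2 : ℂ) =
      ((r ^ (1 / 2 : ℝ) : ℝ) : ℂ) * exp (-(π * I / 4 * s)) := by
  have hI : -(s : ℂ) * I ≠ 0 := by rcases hs with rfl | rfl <;> simp
  have hlog : log (-(s : ℂ) * I) = -(π / 2 * s) * I := by
    rcases hs with rfl | rfl <;> simp [log_I, log_neg_I]
  rw [cpow_def_of_ne_zero (mul_ne_zero (ofReal_ne_zero.mpr hr.ne') hI), log_ofReal_mul hr hI,
    hlog, Real.rpow_def_of_pos hr, ofReal_exp, ← exp_add]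
  congr 1
  push_cast
  ring

theorem phase_mul_cpow_half_pi_div_dampedCoeff_zero {lam : ι → ℝ} {i : ι} (hl : lam i ≠ 0) :
    exp (π * I / 4 * (Real.sign (lam i) : ℝ)) * ((|lam i| ^ ((1 : ℝ) / 2) : ℝ) : ℂ) *
      (π / dampedCoeff lam 0 i) ^ (1 / 2 : ℂ) = (((2 * π) ^ ((1 : ℝ) / 2) : ℝ) : ℂ) := by
  have habs : 0 < |lam i| := abs_pos.mpr hl
  rw [pi_div_dampedCoeff_zero hl,
    ofReal_mul_sign_I_cpow_half (by positivity) (Real.sign_apply_eq_of_ne_zero _ hl)]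
  calc _ = exp (π * I / 4 * (Real.sign (lam i) : ℝ) + -(π * I / 4 * (Real.sign (lam i) : ℝ))) *
        (((|lam i| ^ ((1 : ℝ) / 2) * (2 * π / |lam i|) ^ ((1 : ℝ) / 2) : ℝ)) : ℂ) := by
        rw [exp_add]; push_cast; ring
    _ = _ := by
      rw [add_neg_cancel, exp_zero, one_mul, ← Real.mul_rpow habs.le (by positivity),
        mul_div_cancel₀ _ habs.ne']

end Damping

section Limits

variable {ι : Type*} [Fintype ι]

theorem continuousAt_gaussPartition_dampedCoeff {lam : ι → ℝ} (hinv : ∀ i, lam i ≠ 0) :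
    ContinuousAt (fun ε : ℝ => gaussPartition (dampedCoeff lam ε)) 0 := by
  refine tendsto_finsetProd _ fun i _ => ?_
  have hslit : (π : ℂ) / dampedCoeff lam 0 i ∈ slitPlane := by
    rw [pi_div_dampedCoeff_zero (hinv i), mem_slitPlane_iff]
    right
    rcases hinv i |>.lt_or_gt with h | h
    · simp [Real.sign_of_neg h, Real.pi_ne_zero, h.ne]
    · simp [Real.sign_of_pos h, Real.pi_ne_zero, h.ne']
  have hquot : ContinuousAt (fun ε : ℝ => (π : ℂ) / dampedCoeff lam ε i) 0 :=
    continuousAt_const.div (by unfold dampedCoeff; fun_prop) (dampedCoeff_ne_zero 0 (hinv i))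
  exact ContinuousAt.comp (g := (· ^ (1 / 2 : ℂ))) (continuousAt_cpow_const hslit) hquot

theorem continuousAt_gaussHalfVar_dampedCoeff {lam : ι → ℝ} (hinv : ∀ i, lam i ≠ 0)
    (w : ι → ℝ) : ContinuousAt (fun ε : ℝ => gaussHalfVar (dampedCoeff lam ε) w) 0 := by
  refine tendsto_finsetSum _ fun i _ => continuousAt_const.div (continuousAt_const.mul ?_)
    (mul_ne_zero (by norm_num) (dampedCoeff_ne_zero 0 (hinv i)))
  unfold dampedCoeff
  fun_prop

theorem normalization_mul_gaussPartition_dampedCoeff_zero {lam : ι → ℝ}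
    (hinv : ∀ i, lam i ≠ 0) :
    1 / ((((2 * π) ^ ((Fintype.card ι : ℝ) / 2) : ℝ) : ℂ) /
        ∏ i, (exp (π * I / 4 * (Real.sign (lam i) : ℝ)) *
          ((|lam i| ^ ((1 : ℝ) / 2) : ℝ) : ℂ))) *
      gaussPartition (dampedCoeff lam 0) = 1 := by
  have hprod : (∏ i, (exp (π * I / 4 * (Real.sign (lam i) : ℝ)) *
      ((|lam i| ^ ((1 : ℝ) / 2) : ℝ) : ℂ))) * gaussPartition (dampedCoeff lam 0) =
      (((2 * π) ^ ((Fintype.card ι : ℝ) / 2) : ℝ) : ℂ) := by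
    rw [gaussPartition, ← prod_mul_distrib,
      prod_congr rfl fun i _ => phase_mul_cpow_half_pi_div_dampedCoeff_zero (hinv i), prod_const,
      card_univ, ← ofReal_pow, ← Real.rpow_natCast, ← Real.rpow_mul (by positivity)]
    ring_nf
  rw [one_div_div, div_mul_eq_mul_div, hprod, div_self (ofReal_ne_zero.mpr (by positivity))]

end Limits

section Regulated

variable {E : Type*} [NormedAddCommGroup E] [InnerProductSpace ℝ E] [FiniteDimensional ℝ E]
  [MeasurableSpace E] [BorelSpace E] {ι : Type*} [Fintype ι]
  (S : E →ₗ[ℝ] E) (lam : ι → ℝ) (b : OrthonormalBasis ι ℝ E) (v : E) (c : ℝ)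

theorem integral_oscillatory_eq_integral_dampedCoeff (hdiag : ∀ i, S (b i) = lam i • b i)
    (f : ℝ → ℂ) (ε : ℝ) :
    ∫ x, f (inner ℝ v x + c) * exp (-((ε * ‖x‖ ^ 2 : ℝ) : ℂ)) *
        exp (-(I / 2) * ((inner ℝ x (S x) : ℝ) : ℂ)) =
      ∫ y : ι → ℝ, f (∑ i, b.repr v i * y i + c) *
        exp (-∑ i, dampedCoeff lam ε i * (y i : ℂ) ^ 2) := by
  rw [integral_eq_integral_coord b]
  congr 1 with y
  rw [inner_repr_symm_toLp_right, norm_repr_symm_toLp_sq,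
    inner_repr_symm_toLp_apply_of_eigen S lam b hdiag, mul_assoc, ← exp_add]
  congr 2
  simp only [ofReal_mul, ofReal_sum, ofReal_pow, mul_sum, ← sum_neg_distrib, ← sum_add_distrib]
  exact sum_congr rfl fun i _ => by simp only [dampedCoeff]; ring

theorem tendsto_integral_oscillatory (hdiag : ∀ i, S (b i) = lam i • b i) (N : ℂ) (f : ℝ → ℂ)
    {F : ℝ → ℂ}
    (hF : ∀ ε > 0, ∫ y : ι → ℝ, f (∑ i, b.repr v i * y i + c) *
      exp (-∑ i, dampedCoeff lam ε i * (y i : ℂ) ^ 2) = F ε)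
    (hF_cont : ContinuousAt F 0) :
    Tendsto (fun ε : ℝ => ∫ x, f (inner ℝ v x + c) * exp (-((ε * ‖x‖ ^ 2 : ℝ) : ℂ)) *
        (N * exp (-(I / 2) * ((inner ℝ x (S x) : ℝ) : ℂ)))) (𝓝[>] 0) (𝓝 (N * F 0)) := by
  refine ((hF_cont.tendsto.const_mul N).mono_left nhdsWithin_le_nhds).congr' ?_
  filter_upwards [self_mem_nhdsWithin] with ε hε
  rw [← hF ε hε, ← integral_oscillatory_eq_integral_dampedCoeff S lam b v c hdiag,
    ← integral_const_mul]
  congr 1 with x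
  ring

theorem tendsto_integral_oscillatory_pow (hdiag : ∀ i, S (b i) = lam i • b i)
    (hinv : ∀ i, lam i ≠ 0) {N : ℂ} (hN : N * gaussPartition (dampedCoeff lam 0) = 1) (n : ℕ) :
    Tendsto (fun ε : ℝ => ∫ x, ((inner ℝ v x + c : ℝ) : ℂ) ^ n *
        exp (-((ε * ‖x‖ ^ 2 : ℝ) : ℂ)) * (N * exp (-(I / 2) * ((inner ℝ x (S x) : ℝ) : ℂ))))
      (𝓝[>] 0) (𝓝 (n ! * gaussCoeff c (gaussHalfVar (dampedCoeff lam 0) ⇑(b.repr v)) n)) := by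
  have h := tendsto_integral_oscillatory S lam b v c hdiag N (fun s => (s : ℂ) ^ n)
    (F := fun ε => n ! * (gaussPartition (dampedCoeff lam ε) *
      gaussCoeff c (gaussHalfVar (dampedCoeff lam ε) ⇑(b.repr v)) n))
    (fun ε hε => integral_pow_affine_mul_gaussian (fun i => by rwa [re_dampedCoeff]) _ c n)
    (continuousAt_const.mul ((continuousAt_gaussPartition_dampedCoeff hinv).mul
      (ContinuousAt.comp (g := fun s => gaussCoeff c s n)
        (continuous_gaussCoeff c n).continuousAt (continuousAt_gaussHalfVar_dampedCoeff hinv _))))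
  convert h using 2
  linear_combination
    (-(n ! : ℂ) * gaussCoeff c (gaussHalfVar (dampedCoeff lam 0) ⇑(b.repr v)) n) * hN

theorem tendsto_integral_oscillatory_exp (hdiag : ∀ i, S (b i) = lam i • b i)
    (hinv : ∀ i, lam i ≠ 0) {N : ℂ} (hN : N * gaussPartition (dampedCoeff lam 0) = 1) :
    Tendsto (fun ε : ℝ => ∫ x, exp ((inner ℝ v x + c : ℝ) : ℂ) *
        exp (-((ε * ‖x‖ ^ 2 : ℝ) : ℂ)) * (N * exp (-(I / 2) * ((inner ℝ x (S x) : ℝ) : ℂ))))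
      (𝓝[>] 0) (𝓝 (exp (c + gaussHalfVar (dampedCoeff lam 0) ⇑(b.repr v)))) := by
  have h := tendsto_integral_oscillatory S lam b v c hdiag N (fun s => exp (s : ℂ))
    (F := fun ε => gaussPartition (dampedCoeff lam ε) *
      exp (c + gaussHalfVar (dampedCoeff lam ε) ⇑(b.repr v)))
    (fun ε hε => by
      simpa only [one_mul, mul_one, one_pow] using integral_cexp_mul_affine_mul_gaussian
        (fun i => by rwa [re_dampedCoeff]) _ c 1)
    ((continuousAt_gaussPartition_dampedCoeff hinv).mul
      (ContinuousAt.comp (g := exp) continuous_exp.continuousAt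
        (continuousAt_const.add (continuousAt_gaussHalfVar_dampedCoeff hinv _))))
  convert h using 2
  linear_combination (-exp (c + gaussHalfVar (dampedCoeff lam 0) ⇑(b.repr v))) * hN

end Regulated

end OscillatoryGauss

end

open OscillatoryGauss

/-- Let `dμ(x) = (1/Z) e^{−(i/2)⟨x,Sx⟩}dx` be the normalized non-degenerate centered
oscillatory Gauss measure (with `S` diagonalized by an orthonormal basis with
nonzero eigenvalues `lam`, `Z = (2π)^{d/2}/∏√(iλ_k)`), and `Y(x) = ⟨v,x⟩ + c`
an affine map whose first and second regulated moments `m₁, m₂` satisfy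
`m₂ = m₁²`.  Then `∫_∼ Yⁿ dμ = m₁ⁿ` for all `n`, and `∫_∼ e^Y dμ = exp(m₁)`. -/
theorem stmt_17 (d : ℕ)
    (S : EuclideanSpace ℝ (Fin d) →ₗ[ℝ] EuclideanSpace ℝ (Fin d))
    (lam : Fin d → ℝ)
    (b : OrthonormalBasis (Fin d) ℝ (EuclideanSpace ℝ (Fin d)))
    (hdiag : ∀ i, S (b i) = lam i • b i) (hinv : ∀ i, lam i ≠ 0)
    (v : EuclideanSpace ℝ (Fin d)) (c : ℝ) (m1 m2 : ℂ)
    (hm1 : Tendsto (fun ε : ℝ =>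
        ∫ x : EuclideanSpace ℝ (Fin d),
          (((inner ℝ v x : ℝ) + c : ℝ) : ℂ) *
            Complex.exp (-((ε * ‖x‖ ^ 2 : ℝ) : ℂ)) *
            ((1 : ℂ) / ((((2 * Real.pi) ^ ((d : ℝ) / 2) : ℝ) : ℂ) /
                ∏ i, (Complex.exp (Real.pi * Complex.I / 4 * (Real.sign (lam i) : ℝ)) *
                  ((|lam i| ^ ((1 : ℝ) / 2) : ℝ) : ℂ))) *
              Complex.exp (-(Complex.I / 2) * ((inner ℝ x (S x) : ℝ) : ℂ))))
      (𝓝[>] (0 : ℝ)) (𝓝 m1))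
    (hm2 : Tendsto (fun ε : ℝ =>
        ∫ x : EuclideanSpace ℝ (Fin d),
          (((inner ℝ v x : ℝ) + c : ℝ) : ℂ) ^ 2 *
            Complex.exp (-((ε * ‖x‖ ^ 2 : ℝ) : ℂ)) *
            ((1 : ℂ) / ((((2 * Real.pi) ^ ((d : ℝ) / 2) : ℝ) : ℂ) /
                ∏ i, (Complex.exp (Real.pi * Complex.I / 4 * (Real.sign (lam i) : ℝ)) *
                  ((|lam i| ^ ((1 : ℝ) / 2) : ℝ) : ℂ))) *
              Complex.exp (-(Complex.I / 2) * ((inner ℝ x (S x) : ℝ) : ℂ))))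
      (𝓝[>] (0 : ℝ)) (𝓝 m2))
    (hcov : m2 = m1 ^ 2) :
    (∀ n : ℕ,
      Tendsto (fun ε : ℝ =>
          ∫ x : EuclideanSpace ℝ (Fin d),
            (((inner ℝ v x : ℝ) + c : ℝ) : ℂ) ^ n *
              Complex.exp (-((ε * ‖x‖ ^ 2 : ℝ) : ℂ)) *
              ((1 : ℂ) / ((((2 * Real.pi) ^ ((d : ℝ) / 2) : ℝ) : ℂ) /
                  ∏ i, (Complex.exp (Real.pi * Complex.I / 4 * (Real.sign (lam i) : ℝ)) *
                    ((|lam i| ^ ((1 : ℝ) / 2) : ℝ) : ℂ))) *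
                Complex.exp (-(Complex.I / 2) * ((inner ℝ x (S x) : ℝ) : ℂ))))
        (𝓝[>] (0 : ℝ)) (𝓝 (m1 ^ n)))
    ∧
    Tendsto (fun ε : ℝ =>
        ∫ x : EuclideanSpace ℝ (Fin d),
          Complex.exp ((((inner ℝ v x : ℝ) + c : ℝ) : ℂ)) *
            Complex.exp (-((ε * ‖x‖ ^ 2 : ℝ) : ℂ)) *
            ((1 : ℂ) / ((((2 * Real.pi) ^ ((d : ℝ) / 2) : ℝ) : ℂ) /
                ∏ i, (Complex.exp (Real.pi * Complex.I / 4 * (Real.sign (lam i) : ℝ)) *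
                  ((|lam i| ^ ((1 : ℝ) / 2) : ℝ) : ℂ))) *
              Complex.exp (-(Complex.I / 2) * ((inner ℝ x (S x) : ℝ) : ℂ))))
      (𝓝[>] (0 : ℝ)) (𝓝 (Complex.exp m1)) := by
  have hN := normalization_mul_gaussPartition_dampedCoeff_zero hinv
  rw [Fintype.card_fin] at hN
  have hmom := tendsto_integral_oscillatory_pow S lam b v c hdiag hinv hN
  have hexp := tendsto_integral_oscillatory_exp S lam b v c hdiag hinv hN
  set s₀ := gaussHalfVar (dampedCoeff lam 0) ⇑(b.repr v)
  have hm1c : m1 = c := by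
    have h := hmom 1
    simp only [pow_one, gaussCoeff_one, Nat.factorial_one, Nat.cast_one, one_mul] at h
    exact tendsto_nhds_unique hm1 h
  have hs₀ : s₀ = 0 := by
    have hm2s : m2 = 2 * (c ^ 2 / 2 + s₀) := by
      simpa [gaussCoeff_two] using tendsto_nhds_unique hm2 (hmom 2)
    rw [hm2s, hm1c] at hcov
    linear_combination hcov / 2
  refine ⟨fun n => ?_, ?_⟩
  · convert hmom n using 2
    rw [hs₀, gaussCoeff_zero_right, hm1c,
      mul_div_cancel₀ _ (Nat.cast_ne_zero.mpr n.factorial_ne_zero)]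
  · convert hexp using 2
    rw [hs₀, hm1c, add_zero]
end
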